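/- Let A be a normed division algebra. Then for all a, c ∈ A one has the cancellation identities (a*c)*conj(c) = ‖c‖² • a, (a*conj(c))*c = ‖c‖² • a, a*(conj(a)*c) = ‖a‖² • c, and conj(a)*(a*c) = ‖a‖² • c. -/

import Mathlib

open scoped RealInnerProductSpace

/-- A normed division algebra: a real inner product space with an `ℝ`-bilinear
multiplication (not necessarily associative or commutative), a two-sided
multiplicative identity `one ≠ 0`, satisfying `‖a*b‖ = ‖a‖ * ‖b‖`. -/
structure NormedDivisionAlgebra (A : Type*) [NormedAddCommGroup A] [InnerProductSpace ℝ A] where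
  mul : A →ₗ[ℝ] A →ₗ[ℝ] A
  one : A
  one_ne_zero : one ≠ 0
  one_mul : ∀ a : A, mul one a = a
  mul_one : ∀ a : A, mul a one = a
  norm_mul : ∀ a b : A, ‖mul a b‖ = ‖a‖ * ‖b‖

namespace NormedDivisionAlgebra

variable {A : Type*} [NormedAddCommGroup A] [InnerProductSpace ℝ A]

/-- `Re a`: the orthogonal projection of `a` onto the real part `Re A = ℝ · 1`. -/
noncomputable def re (D : NormedDivisionAlgebra A) (a : A) : A :=
  (⟪a, D.one⟫ / ‖D.one‖ ^ 2) • D.one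

/-- `Im a`: the orthogonal projection of `a` onto the imaginary part `Im A = (ℝ · 1)ᗮ`. -/
noncomputable def im (D : NormedDivisionAlgebra A) (a : A) : A := a - D.re a

/-- The conjugate `conj a = Re a - Im a`. -/
noncomputable def conj (D : NormedDivisionAlgebra A) (a : A) : A := D.re a - D.im a

/-- The real part `Re A = ℝ · 1` as a submodule. -/
def ReSub (D : NormedDivisionAlgebra A) : Submodule ℝ A := Submodule.span ℝ {D.one}

/-- The imaginary part `Im A = (ℝ · 1)ᗮ` as a submodule. -/
noncomputable def ImSub (D : NormedDivisionAlgebra A) : Submodule ℝ A := (Submodule.span ℝ {D.one})ᗮ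

/-- The commutator `[a, b] = a*b - b*a`. -/
def comm (D : NormedDivisionAlgebra A) (a b : A) : A := D.mul a b - D.mul b a

/-- The associator `[a, b, c] = (a*b)*c - a*(b*c)`. -/
def assoc (D : NormedDivisionAlgebra A) (a b c : A) : A :=
  D.mul (D.mul a b) c - D.mul a (D.mul b c)

/-- The cross product `a × b = Im (a*b)` (intended for `a, b ∈ Im A`). -/
noncomputable def cross (D : NormedDivisionAlgebra A) (a b : A) : A := D.im (D.mul a b)

end NormedDivisionAlgebra

/-!
Polarizing the composition law `‖x c‖ = ‖x‖ ‖c‖` shows that right multiplication by `c` scales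
inner products by `‖c‖²`, and polarizing once more in `c` (against `1`) shows that right
multiplication by `conj c` is the adjoint of right multiplication by `c`. Hence
`⟪(a c) conj c, y⟫ = ⟪a c, y c⟫ = ‖c‖² ⟪a, y⟫` for every `y`, which is the first identity; the
second follows by replacing `c` with `conj c`. The last two are the first two in the opposite
algebra, whose conjugation is the same.
-/

lemma inner_map_map_of_norm_map_eq_mul {E F : Type*} [NormedAddCommGroup E]
    [InnerProductSpace ℝ E] [NormedAddCommGroup F] [InnerProductSpace ℝ F]
    (f : E →ₗ[ℝ] F) (r : ℝ) (hf : ∀ x, ‖f x‖ = ‖x‖ * r) (x y : E) :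
    ⟪f x, f y⟫ = ⟪x, y⟫ * r ^ 2 := by
  rw [real_inner_eq_norm_add_mul_self_sub_norm_mul_self_sub_norm_mul_self_div_two,
    real_inner_eq_norm_add_mul_self_sub_norm_mul_self_sub_norm_mul_self_div_two x y,
    ← map_add, hf, hf, hf]
  ring

namespace NormedDivisionAlgebra

variable {A : Type*} [NormedAddCommGroup A] [InnerProductSpace ℝ A] (D : NormedDivisionAlgebra A)

def op : NormedDivisionAlgebra A where
  mul := D.mul.flip
  one := D.one
  one_ne_zero := D.one_ne_zero
  one_mul := D.mul_one
  mul_one := D.one_mul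
  norm_mul a b := by rw [LinearMap.flip_apply, D.norm_mul, mul_comm]

lemma norm_one : ‖D.one‖ = 1 := by
  have h : ‖D.one‖ * ‖D.one‖ = ‖D.one‖ * 1 := by rw [← D.norm_mul, D.mul_one, _root_.mul_one]
  exact mul_left_cancel₀ (norm_ne_zero_iff.mpr D.one_ne_zero) h

lemma conj_eq (c : A) : D.conj c = (2 * ⟪c, D.one⟫) • D.one - c := by
  rw [conj, im, re, D.norm_one]
  module

lemma inner_conj_one (c : A) : ⟪D.conj c, D.one⟫ = ⟪c, D.one⟫ := by
  rw [D.conj_eq, inner_sub_left, real_inner_smul_left, real_inner_self_eq_norm_sq, D.norm_one]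
  ring

lemma conj_conj (c : A) : D.conj (D.conj c) = c := by
  rw [D.conj_eq (D.conj c), D.inner_conj_one, D.conj_eq]
  module

lemma norm_conj (c : A) : ‖D.conj c‖ = ‖c‖ := by
  have h : ⟪D.conj c, D.conj c⟫ = ⟪c, c⟫ := by
    rw [D.conj_eq, inner_sub_left, inner_sub_right, inner_sub_right, real_inner_smul_left,
      real_inner_smul_left, real_inner_smul_right, real_inner_smul_right,
      real_inner_self_eq_norm_sq D.one, D.norm_one, real_inner_comm D.one c]
    ring
  rw [real_inner_self_eq_norm_sq, real_inner_self_eq_norm_sq] at h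
  exact (pow_left_inj₀ (norm_nonneg _) (norm_nonneg _) two_ne_zero).mp h

lemma inner_mul_mul_right (a b c : A) :
    ⟪D.mul a c, D.mul b c⟫ = ⟪a, b⟫ * ‖c‖ ^ 2 :=
  inner_map_map_of_norm_map_eq_mul (D.mul.flip c) ‖c‖ (fun x ↦ D.norm_mul x c) a b

lemma inner_mul_add_inner_mul (x y c : A) :
    ⟪D.mul x c, y⟫ + ⟪x, D.mul y c⟫ = 2 * ⟪c, D.one⟫ * ⟪x, y⟫ := by
  have h := D.inner_mul_mul_right x y (c + D.one)
  rw [map_add, map_add, D.mul_one, D.mul_one, inner_add_left, inner_add_right,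
    inner_add_right, D.inner_mul_mul_right, norm_add_sq_real, D.norm_one] at h
  linear_combination h

lemma inner_mul_conj (x c y : A) : ⟪D.mul x (D.conj c), y⟫ = ⟪x, D.mul y c⟫ := by
  rw [D.conj_eq, map_sub, map_smul, D.mul_one, inner_sub_left, real_inner_smul_left]
  linear_combination -D.inner_mul_add_inner_mul x y c

lemma mul_mul_conj (a c : A) : D.mul (D.mul a c) (D.conj c) = ‖c‖ ^ 2 • a :=
  ext_inner_right ℝ fun y ↦ by
    rw [inner_mul_conj, inner_mul_mul_right, real_inner_smul_left, mul_comm]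

lemma mul_conj_mul (a c : A) : D.mul (D.mul a (D.conj c)) c = ‖c‖ ^ 2 • a := by
  simpa only [conj_conj, norm_conj] using D.mul_mul_conj a (D.conj c)

end NormedDivisionAlgebra

theorem nda_cancellation {A : Type*} [NormedAddCommGroup A] [InnerProductSpace ℝ A]
    (D : NormedDivisionAlgebra A) (a c : A) :
    D.mul (D.mul a c) (D.conj c) = (‖c‖ ^ 2) • a ∧
      D.mul (D.mul a (D.conj c)) c = (‖c‖ ^ 2) • a ∧
      D.mul a (D.mul (D.conj a) c) = (‖a‖ ^ 2) • c ∧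
      D.mul (D.conj a) (D.mul a c) = (‖a‖ ^ 2) • c :=
  ⟨D.mul_mul_conj a c, D.mul_conj_mul a c, D.op.mul_conj_mul c a, D.op.mul_mul_conj c a⟩
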